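/- arXiv:1906.03202 — 3 statements merged into one kernel-verified Lean document; each statement's English description precedes it below -/
import Mathlib

section
/- For the so_N R-matrix R(u,v) = I⊗I + cP/(u-v) - cQ/(u-v+cκ) with κ = N/2 - 1, one has the unitarity relation R(u,v)·R(v,u) = (1 - c²/(u-v)²)·(I⊗I), provided u ≠ v, u-v ≠ ±cκ. -/
open Matrix Kronecker

/-- P = Σ E_{ij} ⊗ E_{ji} -/
noncomputable def soP (N : ℕ) : Matrix (Fin N × Fin N) (Fin N × Fin N) ℂ :=
  ∑ i : Fin N, ∑ j : Fin N, Matrix.single i j (1 : ℂ) ⊗ₖ Matrix.single j i (1 : ℂ)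

/-- Q = Σ E_{ij} ⊗ E_{i'j'} with i' = N+1-i (0-based: Fin.rev) -/
noncomputable def soQ (N : ℕ) : Matrix (Fin N × Fin N) (Fin N × Fin N) ℂ :=
  ∑ i : Fin N, ∑ j : Fin N,
    Matrix.single i j (1 : ℂ) ⊗ₖ Matrix.single i.rev j.rev (1 : ℂ)

/-- The so_N R-matrix R(u,v) = I⊗I + cP/(u-v) - cQ/(u-v+cκ), κ = N/2 - 1. -/
noncomputable def soR (N : ℕ) (c u v : ℂ) : Matrix (Fin N × Fin N) (Fin N × Fin N) ℂ :=
  1 + (c / (u - v)) • soP N - (c / (u - v + c * ((N : ℂ) / 2 - 1))) • soQ N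

lemma soP_apply (N : ℕ) (a b cc d : Fin N) :
    soP N (a,b) (cc,d) = if a = d ∧ b = cc then 1 else 0 := by
  classical
  simp only [soP, Matrix.sum_apply, kroneckerMap_apply, Matrix.single, Matrix.of_apply]
  rw [Fintype.sum_eq_single a (by intro i hi; rw [Finset.sum_eq_zero]; intro j _; simp; tauto)]
  rw [Fintype.sum_eq_single cc (by intro j hj; simp; tauto)]
  by_cases h1 : a = d <;> by_cases h2 : b = cc <;> simp [h1, h2] <;> aesop

lemma soQ_apply (N : ℕ) (a b cc d : Fin N) :
    soQ N (a,b) (cc,d) = if b = a.rev ∧ d = cc.rev then 1 else 0 := by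
  classical
  simp only [soQ, Matrix.sum_apply, kroneckerMap_apply, Matrix.single, Matrix.of_apply]
  rw [Fintype.sum_eq_single a (by intro i hi; rw [Finset.sum_eq_zero]; intro j _; simp; tauto)]
  rw [Fintype.sum_eq_single cc (by intro j hj; simp; tauto)]
  by_cases h1 : b = a.rev <;> by_cases h2 : d = cc.rev <;> simp [h1, h2] <;> aesop

lemma soP_mul_soP (N : ℕ) : soP N * soP N = 1 := by
  ext ⟨a,b⟩ ⟨cc,d⟩
  simp [Matrix.mul_apply, Fintype.sum_prod_type, soP_apply, Matrix.one_apply, ite_and,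
    Finset.sum_ite_eq, Finset.sum_ite_eq', Prod.ext_iff]

lemma soP_mul_soQ (N : ℕ) : soP N * soQ N = soQ N := by
  ext ⟨a,b⟩ ⟨cc,d⟩
  have hrev : ∀ x : Fin N, (a = x.rev) = (x = a.rev) := by
    intro x
    rw [eq_iff_iff, ← Fin.rev_eq_iff, eq_comm]
  simp [Matrix.mul_apply, Fintype.sum_prod_type, soP_apply, soQ_apply, ite_and,
    Finset.sum_ite_eq, Finset.sum_ite_eq', hrev]
  by_cases h1 : b = a.rev <;> by_cases h2 : d = cc.rev <;> simp [h1, h2]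

lemma soQ_mul_soP (N : ℕ) : soQ N * soP N = soQ N := by
  ext ⟨a,b⟩ ⟨cc,d⟩
  have hrev : ∀ x : Fin N, (a = x.rev) = (x = a.rev) := by
    intro x
    rw [eq_iff_iff, ← Fin.rev_eq_iff, eq_comm]
  simp [Matrix.mul_apply, Fintype.sum_prod_type, soP_apply, soQ_apply, ite_and, hrev,
    Finset.sum_ite_eq, Finset.sum_ite_eq']
  aesop

lemma soQ_mul_soQ (N : ℕ) : soQ N * soQ N = (N : ℂ) • soQ N := by
  ext ⟨a,b⟩ ⟨cc,d⟩
  simp [Matrix.mul_apply, Fintype.sum_prod_type, soP_apply, soQ_apply, ite_and,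
    Finset.sum_ite_eq, Finset.sum_ite_eq']
  aesop

lemma soR_aux (n c x z w : ℂ) (hx : x ≠ 0) (hz : z ≠ 0) (hw : w ≠ 0)
    (h : n * c ^ 2 * x - c * x * w - c * x * z - c ^ 2 * z + c ^ 2 * w = 0) :
    n * (c / z * (c / w)) - c / z - c / w - c / x * (c / w) - c / -x * (c / z) = 0 := by
  have hD : z * w * z * w * (x * w) ≠ 0 :=
    mul_ne_zero (mul_ne_zero (mul_ne_zero (mul_ne_zero hz hw) hz) hw) (mul_ne_zero hx hw)
  field_simp
  linear_combination h

theorem soR_unitarity (N : ℕ) (hN : 2 ≤ N) (c u v : ℂ) (hc : c ≠ 0) (huv : u ≠ v)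
    (hplus : u - v ≠ c * ((N : ℂ) / 2 - 1)) (hminus : u - v ≠ -(c * ((N : ℂ) / 2 - 1))) :
    soR N c u v * soR N c v u = (1 - c ^ 2 / (u - v) ^ 2) • 1 := by
  have expand : ∀ p q p' q' : ℂ,
      (1 + p • soP N - q • soQ N) * (1 + p' • soP N - q' • soQ N) =
        (1 + p * p') • (1 : Matrix (Fin N × Fin N) (Fin N × Fin N) ℂ) + (p + p') • soP N +
          ((N : ℂ) * (q * q') - q - q' - p * q' - p' * q) • soQ N := by
    intro p q p' q'
    simp only [add_mul, sub_mul, mul_add, mul_sub, Matrix.smul_mul, Matrix.mul_smul,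
      one_mul, mul_one, soP_mul_soP, soP_mul_soQ, soQ_mul_soP, soQ_mul_soQ, smul_smul]
    module
  have hx0 : u - v ≠ 0 := sub_ne_zero.mpr huv
  have hpa : u - v + c * ((N : ℂ) / 2 - 1) ≠ 0 := by
    intro h; exact hminus (by linear_combination h)
  have hma : -(u - v) + c * ((N : ℂ) / 2 - 1) ≠ 0 := by
    intro h; exact hplus (by linear_combination -h)
  have hvu : v - u = -(u - v) := by ring
  simp only [soR, hvu]
  rw [expand]
  obtain ⟨x, hxdef⟩ : ∃ x : ℂ, u - v = x := ⟨u - v, rfl⟩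
  rw [hxdef] at hx0 hpa hma ⊢
  have h1 : c / x + c / -x = 0 := by rw [div_neg, add_neg_cancel]
  have h2 : (N : ℂ) * (c / (x + c * ((N : ℂ) / 2 - 1)) * (c / (-x + c * ((N : ℂ) / 2 - 1))))
      - c / (x + c * ((N : ℂ) / 2 - 1)) - c / (-x + c * ((N : ℂ) / 2 - 1))
      - c / x * (c / (-x + c * ((N : ℂ) / 2 - 1)))
      - c / -x * (c / (x + c * ((N : ℂ) / 2 - 1))) = 0 := by
    exact soR_aux (N : ℂ) c x _ _ hx0 hpa hma (by ring)
  have h3 : 1 + c / x * (c / -x) = 1 - c ^ 2 / x ^ 2 := by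
    rw [div_neg, mul_neg, div_mul_div_comm, ← sub_eq_add_neg]
    ring
  rw [h1, h2, h3]
  simp
end

section
/- Let A be a (possibly noncommutative) unital ℂ-algebra, let T(u), T(v) ∈ M_N(A) and let R ∈ M_N(ℂ)⊗M_N(ℂ) be invertible. If R (T(u)⊗I)(I⊗T(v)) = (I⊗T(v))(T(u)⊗I) R in M_N(A)⊗M_N(A), then the traces commute: [tr T(u), tr T(v)] = 0 in A. -/
/-!
Conjugating by the invertible scalar matrix `R` does not change the trace, because scalar entries
commute with `A`; so `tr ((T(u) ⊗ I)(I ⊗ T(v))) = tr ((I ⊗ T(v))(T(u) ⊗ I))`. Both products are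
Kronecker-type matrices whose traces are `tr T(u) * tr T(v)` and `tr T(v) * tr T(u)` respectively,
even though `A` is not commutative.
-/

open Matrix Kronecker

namespace Matrix

variable {l m n p α : Type*}

section Kronecker

variable [Semiring α] [Fintype m] [Fintype n] [DecidableEq m] [DecidableEq n]

theorem kronecker_one_mul_one_kronecker (A : Matrix l m α) (B : Matrix n p α) :
    A ⊗ₖ (1 : Matrix n n α) * (1 : Matrix m m α) ⊗ₖ B = A ⊗ₖ B := by
  ext ⟨i, j⟩ ⟨k, q⟩
  simp [mul_apply, Fintype.sum_prod_type, one_apply]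

theorem one_kronecker_mul_kronecker_one (A : Matrix m l α) (B : Matrix p n α) :
    (1 : Matrix m m α) ⊗ₖ B * A ⊗ₖ (1 : Matrix n n α) = kroneckerMap (fun a b ↦ b * a) A B := by
  ext ⟨i, j⟩ ⟨k, q⟩
  simp [mul_apply, Fintype.sum_prod_type, one_apply]

theorem trace_kronecker_one_mul_one_kronecker (A : Matrix m m α) (B : Matrix n n α) :
    (A ⊗ₖ (1 : Matrix n n α) * (1 : Matrix m m α) ⊗ₖ B).trace = A.trace * B.trace := by
  rw [kronecker_one_mul_one_kronecker, trace_kronecker]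

theorem trace_one_kronecker_mul_kronecker_one (A : Matrix m m α) (B : Matrix n n α) :
    ((1 : Matrix m m α) ⊗ₖ B * A ⊗ₖ (1 : Matrix n n α)).trace = B.trace * A.trace := by
  rw [one_kronecker_mul_kronecker_one, trace, Fintype.sum_prod_type, Finset.sum_comm]
  simp only [diag_apply, kroneckerMap_apply]
  rw [trace, trace, Finset.sum_mul_sum]
  rfl

end Kronecker

section ScalarConjugation

variable {R A : Type*} [CommSemiring R] [Semiring A] [Algebra R A]

theorem trace_map_algebraMap_mul_comm [Fintype m] [Fintype n] (S : Matrix m n R)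
    (M : Matrix n m A) :
    (S.map (algebraMap R A) * M).trace = (M * S.map (algebraMap R A)).trace := by
  simp only [trace, diag, mul_apply, map_apply]
  rw [Finset.sum_comm]
  simp_rw [Algebra.commutes]

theorem trace_eq_of_map_mul_eq_mul_map [Fintype n] [DecidableEq n] {S : Matrix n n R}
    (hS : IsUnit S) {X Y : Matrix n n A}
    (h : S.map (algebraMap R A) * X = Y * S.map (algebraMap R A)) : X.trace = Y.trace := by
  obtain ⟨u, rfl⟩ := hS
  let v := Units.map (algebraMap R A).mapMatrix.toMonoidHom u
  have hX : X = (↑v⁻¹ : Matrix n n A) * (Y * v) := (Units.eq_inv_mul_iff_mul_eq v).mpr h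
  have hv_inv : (↑v⁻¹ : Matrix n n A) = (↑u⁻¹ : Matrix n n R).map (algebraMap R A) := rfl
  rw [hX, hv_inv, trace_map_algebraMap_mul_comm, ← hv_inv, mul_assoc, Units.mul_inv, mul_one]

end ScalarConjugation

end Matrix

theorem rtt_trace_commute {A : Type*} [Ring A] [Algebra ℂ A] (N : ℕ)
    (Tu Tv : Matrix (Fin N) (Fin N) A)
    (R : Matrix (Fin N × Fin N) (Fin N × Fin N) ℂ) (hR : IsUnit R)
    (hRTT :
      R.map (algebraMap ℂ A) *
          (Matrix.kroneckerMap (· * ·) Tu (1 : Matrix (Fin N) (Fin N) A) *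
            Matrix.kroneckerMap (· * ·) (1 : Matrix (Fin N) (Fin N) A) Tv) =
        Matrix.kroneckerMap (· * ·) (1 : Matrix (Fin N) (Fin N) A) Tv *
            Matrix.kroneckerMap (· * ·) Tu (1 : Matrix (Fin N) (Fin N) A) *
          R.map (algebraMap ℂ A)) :
    Tu.trace * Tv.trace = Tv.trace * Tu.trace :=
  calc Tu.trace * Tv.trace = (Tu ⊗ₖ 1 * 1 ⊗ₖ Tv).trace :=
        (trace_kronecker_one_mul_one_kronecker Tu Tv).symm
    _ = (1 ⊗ₖ Tv * Tu ⊗ₖ 1).trace := trace_eq_of_map_mul_eq_mul_map hR hRTT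
    _ = Tv.trace * Tu.trace := trace_one_kronecker_mul_kronecker_one Tu Tv
end

section
/- Let A be a ℂ-algebra, let c ≠ 0, and let F⁺, F⁻: S → A satisfy (u-v+c/2) F⁺(u)F⁻(v) - (u-v-c/2) F⁻(v)F⁺(u) = (c/2)(F⁺(u)² + F⁻(v)²) for all u,v ∈ S, and also (u-v+c/2)Fᵉ(u)Fᵉ(v) - (u-v-c/2)Fᵉ(v)Fᵉ(u) = (c/2)(Fᵉ(u)²+Fᵉ(v)²) for all u,v ∈ S and ε ∈ {+,-}. Set F(u) = F⁺(u) - F⁻(u), X(u) = F⁺(u)² - F⁻(u)², 𝔣(u,v) = (u-v+c/2)/(u-v) and 𝔥(u,v) = (u-v+c/2)/(c/2). Then for u ≠ v with v ≠ u ± c/2 one has F(u)F⁻(v) = [𝔣(v,u)/𝔣(u,v)] F⁻(v)F(u) + 𝔥(u,v)⁻¹ X(u). -/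
theorem total_current_half_current_exchange {A : Type*} [Ring A] [Algebra ℂ A]
    (c : ℂ) (hc : c ≠ 0) (S : Set ℂ) (Fp Fm : ℂ → A)
    (hmix : ∀ u ∈ S, ∀ v ∈ S,
      (u - v + c / 2) • (Fp u * Fm v) - (u - v - c / 2) • (Fm v * Fp u) =
        (c / 2) • (Fp u * Fp u + Fm v * Fm v))
    (hpp : ∀ u ∈ S, ∀ v ∈ S,
      (u - v + c / 2) • (Fp u * Fp v) - (u - v - c / 2) • (Fp v * Fp u) =
        (c / 2) • (Fp u * Fp u + Fp v * Fp v))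
    (hmm : ∀ u ∈ S, ∀ v ∈ S,
      (u - v + c / 2) • (Fm u * Fm v) - (u - v - c / 2) • (Fm v * Fm u) =
        (c / 2) • (Fm u * Fm u + Fm v * Fm v)) :
    ∀ u ∈ S, ∀ v ∈ S, u ≠ v → v ≠ u + c / 2 → v ≠ u - c / 2 →
      (Fp u - Fm u) * Fm v =
        ((((v - u + c / 2) / (v - u)) / ((u - v + c / 2) / (u - v))) •
            (Fm v * (Fp u - Fm u))) +
          (((u - v + c / 2) / (c / 2))⁻¹) • (Fp u * Fp u - Fm u * Fm u) := by
  intro u hu v hv huv hv1 hv2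
  have had : u - v + c / 2 ≠ 0 := by
    intro h
    apply hv1
    linear_combination -h
  have huv' : u - v ≠ 0 := sub_ne_zero.mpr huv
  have key : ∀ X Y Z : A,
      (u - v + c / 2) • X - (u - v - c / 2) • Y = (c / 2) • Z →
      X = ((u - v + c / 2)⁻¹ * (u - v - c / 2)) • Y
            + ((u - v + c / 2)⁻¹ * (c / 2)) • Z := by
    intro X Y Z h
    have h2 : (u - v + c / 2) • X = (u - v - c / 2) • Y + (c / 2) • Z := by
      linear_combination (norm := module) h
    calc X = (u - v + c / 2)⁻¹ • ((u - v + c / 2) • X) := by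
            rw [smul_smul, inv_mul_cancel₀ had, one_smul]
      _ = _ := by rw [h2, smul_add, smul_smul, smul_smul]
  have e1 := key _ _ _ (hmix u hu v hv)
  have e2 := key _ _ _ (hmm u hu v hv)
  have hvu : v - u ≠ 0 := sub_ne_zero.mpr (Ne.symm huv)
  have hr : ((v - u + c / 2) / (v - u)) / ((u - v + c / 2) / (u - v)) =
      (u - v + c / 2)⁻¹ * (u - v - c / 2) := by
    rw [div_div_div_comm, show v - u + c / 2 = -(u - v - c / 2) by ring,
      show v - u = -(u - v) by ring,
      show -(u - v) / (u - v) = -1 from by rw [neg_div, div_self huv'],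
      neg_div, div_neg, div_one, neg_neg, div_eq_inv_mul]
  have hs : ((u - v + c / 2) / (c / 2))⁻¹ = (u - v + c / 2)⁻¹ * (c / 2) := by
    rw [inv_div, div_eq_inv_mul]
  rw [hr, hs, sub_mul, e1, e2,
    show Fm v * (Fp u - Fm u) = Fm v * Fp u - Fm v * Fm u from mul_sub _ _ _]
  module
end
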